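/- arXiv:1203.5402 — 3 statements merged into one kernel-verified Lean document; each statement's English description precedes it below -/
import Mathlib

section
/- Let A be an m×n real matrix with m > n, with full column rank, and whose columns are orthogonal (i.e., AᵀA is a diagonal matrix). Fix y ∈ ℝ^m and k with 1 ≤ k ≤ n. Let z = (AᵀA)⁻¹((Aᵀy)∘²) and let S ⊆ {1,…,n} be any set of k indices such that z_j ≤ z_i for every i ∈ S and j ∉ S. Define v ∈ ℝ^n by v_i = ((AᵀA)⁻¹Aᵀy)_i for i ∈ S and v_i = 0 for i ∉ S. Then v is k-sparse and ‖Av − y‖ ≤ ‖Ax − y‖ for every k-sparse x ∈ ℝ^n; in particular ‖Av − y‖ equals the minimum of ‖Ax − y‖ over all k-sparse x. -/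
open Matrix

/-- The Euclidean norm of a vector in `Fin m → ℝ`. -/
noncomputable def euclNorm {m : ℕ} (v : Fin m → ℝ) : ℝ :=
  Real.sqrt (∑ i, v i ^ 2)

/-- A vector is `k`-sparse if it has at most `k` nonzero entries. -/
def KSparse {n : ℕ} (k : ℕ) (x : Fin n → ℝ) : Prop :=
  ∃ T : Finset (Fin n), T.card ≤ k ∧ ∀ i ∉ T, x i = 0

lemma sum_le_sum_of_card_le {n : ℕ} (z : Fin n → ℝ) (hz0 : ∀ i, 0 ≤ z i)
    (U V : Finset (Fin n)) (hcard : U.card ≤ V.card)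
    (hle : ∀ u ∈ U, ∀ v ∈ V, z u ≤ z v) :
    ∑ i ∈ U, z i ≤ ∑ i ∈ V, z i := by
  rcases U.eq_empty_or_nonempty with rfl | hU
  · exact Finset.sum_nonneg fun i _ => hz0 i
  · have hV : V.Nonempty := Finset.card_pos.mp (lt_of_lt_of_le (Finset.card_pos.mpr hU) hcard)
    obtain ⟨v0, hv0, hmin⟩ := V.exists_min_image z hV
    calc ∑ i ∈ U, z i ≤ U.card • z v0 :=
          Finset.sum_le_card_nsmul U z (z v0) fun u hu => hle u hu v0 hv0
      _ ≤ V.card • z v0 := nsmul_le_nsmul_left (hz0 v0) hcard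
      _ ≤ ∑ i ∈ V, z i := Finset.card_nsmul_le_sum V z (z v0) fun v hv => hmin v hv

lemma sum_le_sum_max {n : ℕ} (z : Fin n → ℝ) (hz0 : ∀ i, 0 ≤ z i)
    (S T : Finset (Fin n)) (hcard : T.card ≤ S.card)
    (hSmax : ∀ i ∈ S, ∀ j ∉ S, z j ≤ z i) :
    ∑ i ∈ T, z i ≤ ∑ i ∈ S, z i := by
  rw [← Finset.sum_inter_add_sum_sdiff T S z, ← Finset.sum_inter_add_sum_sdiff S T z,
    Finset.inter_comm S T]
  gcongr ∑ i ∈ T ∩ S, z i + ?_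
  have hc : (T \ S).card ≤ (S \ T).card := by
    have h1 := Finset.card_inter_add_card_sdiff T S
    have h2 := Finset.card_inter_add_card_sdiff S T
    rw [Finset.inter_comm S T] at h2
    omega
  exact sum_le_sum_of_card_le z hz0 _ _ hc
    (fun u hu v hv => hSmax v (Finset.mem_sdiff.mp hv).1 u (Finset.mem_sdiff.mp hu).2)

theorem stmt_0 {m n : ℕ} (hmn : n < m) (A : Matrix (Fin m) (Fin n) ℝ)
    (hrank : A.rank = n) (hdiag : (Aᵀ * A).IsDiag)
    (y : Fin m → ℝ) (k : ℕ) (hk1 : 1 ≤ k) (hkn : k ≤ n)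
    (z : Fin n → ℝ)
    (hz : z = (Aᵀ * A)⁻¹.mulVec (fun i => (Aᵀ.mulVec y i) ^ 2))
    (S : Finset (Fin n)) (hS : S.card = k)
    (hSmax : ∀ i ∈ S, ∀ j ∉ S, z j ≤ z i)
    (v : Fin n → ℝ)
    (hv : ∀ i, v i = if i ∈ S then ((Aᵀ * A)⁻¹.mulVec (Aᵀ.mulVec y)) i else 0) :
    KSparse k v ∧
      (∀ x : Fin n → ℝ, KSparse k x →
        euclNorm (A.mulVec v - y) ≤ euclNorm (A.mulVec x - y)) ∧
      IsLeast {r : ℝ | ∃ x : Fin n → ℝ, KSparse k x ∧ r = euclNorm (A.mulVec x - y)}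
        (euclNorm (A.mulVec v - y)) := by
  classical
  set d : Fin n → ℝ := (Aᵀ * A).diag with hd
  have hAA : Aᵀ * A = diagonal d := hdiag.diagonal_diag.symm
  have hdpos : ∀ i, 0 < d i := by
    have hnz : ∀ i, d i ≠ 0 := by
      intro i hi
      have hr : (diagonal d).rank = Fintype.card {i // d i ≠ 0} := Matrix.rank_diagonal d
      rw [← hAA, Matrix.rank_transpose_mul_self, hrank] at hr
      have hlt : Fintype.card {i // d i ≠ 0} < n := by
        rw [Fintype.card_subtype]
        calc (Finset.univ.filter fun j => d j ≠ 0).card < Finset.univ.card := by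
              apply Finset.card_lt_card
              refine ⟨Finset.filter_subset _ _, fun hsub => ?_⟩
              have := hsub (Finset.mem_univ i)
              simp only [Finset.mem_filter] at this
              exact this.2 hi
          _ = n := by simp
      omega
    intro i
    have he : d i = ∑ j, A j i ^ 2 := by
      simp [hd, Matrix.diag, Matrix.mul_apply, Matrix.transpose_apply, sq]
    have hge : 0 ≤ d i := he ▸ Finset.sum_nonneg fun j _ => sq_nonneg _
    exact lt_of_le_of_ne hge (Ne.symm (hnz i))
  set b : Fin n → ℝ := Aᵀ.mulVec y with hb
  have hinv : (Aᵀ * A)⁻¹ = diagonal fun i => (d i)⁻¹ := by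
    rw [hAA]
    apply Matrix.inv_eq_right_inv
    rw [Matrix.diagonal_mul_diagonal]
    convert Matrix.diagonal_one
    exact mul_inv_cancel₀ (hdpos _).ne'
  have hzi : ∀ i, z i = b i ^ 2 / d i := by
    intro i
    rw [hz, hinv]
    simp [Matrix.mulVec_diagonal, div_eq_inv_mul]
  have hz0 : ∀ i, 0 ≤ z i := fun i => by
    rw [hzi]; exact div_nonneg (sq_nonneg _) (hdpos i).le
  have hvi : ∀ i ∈ S, v i = b i / d i := by
    intro i hi
    rw [hv i, if_pos hi, hinv]
    simp [Matrix.mulVec_diagonal, div_eq_inv_mul]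
  have hvi0 : ∀ i ∉ S, v i = 0 := fun i hi => by rw [hv i, if_neg hi]
  -- squared-norm expansion
  have hF : ∀ x : Fin n → ℝ, ∑ j, (A.mulVec x j - y j) ^ 2
      = ∑ j, y j ^ 2 + ∑ i, (d i * x i ^ 2 - 2 * b i * x i) := by
    intro x
    have e1 : ∑ j, (A.mulVec x j) ^ 2 = ∑ i, d i * x i ^ 2 := by
      have h := Matrix.dotProduct_mulVec (A.mulVec x) A x
      rw [← Matrix.mulVec_transpose, Matrix.mulVec_mulVec, hAA] at h
      have h' : A.mulVec x ⬝ᵥ A.mulVec x = (diagonal d).mulVec x ⬝ᵥ x := by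
        rw [← h]
      simpa [dotProduct, Matrix.mulVec_diagonal, sq, mul_assoc] using h'
    have e2 : ∑ j, y j * A.mulVec x j = ∑ i, b i * x i := by
      have h := Matrix.dotProduct_mulVec y A x
      rw [← Matrix.mulVec_transpose] at h
      exact h
    have expand : ∀ j, (A.mulVec x j - y j) ^ 2
        = (A.mulVec x j) ^ 2 - 2 * (y j * A.mulVec x j) + y j ^ 2 := fun j => by ring
    simp only [expand]
    have e3 : ∑ i, 2 * b i * x i = 2 * ∑ i, b i * x i := by
      rw [Finset.mul_sum]
      exact Finset.sum_congr rfl fun i _ => by ring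
    rw [Finset.sum_add_distrib, Finset.sum_sub_distrib, ← Finset.mul_sum, e1, e2,
      Finset.sum_sub_distrib, e3]
    ring
  -- per-coordinate bounds
  have key : ∀ (i : Fin n) (t : ℝ), -(z i) ≤ d i * t ^ 2 - 2 * b i * t := by
    intro i t
    have h1 := hdpos i
    have h2 : z i * d i = b i ^ 2 := by
      rw [hzi]; field_simp
    nlinarith [sq_nonneg (d i * t - b i)]
  have keyS : ∀ i ∈ S, d i * v i ^ 2 - 2 * b i * v i = -(z i) := by
    intro i hi
    have h1 := (hdpos i).ne'
    rw [hvi i hi, hzi i]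
    field_simp
    ring
  -- value at v
  have hFv : ∑ j, (A.mulVec v j - y j) ^ 2 = ∑ j, y j ^ 2 - ∑ i ∈ S, z i := by
    rw [hF v]
    have h1 : ∑ i ∈ S, (d i * v i ^ 2 - 2 * b i * v i)
        = ∑ i, (d i * v i ^ 2 - 2 * b i * v i) := by
      apply Finset.sum_subset (Finset.subset_univ S)
      intro i _ hi
      rw [hvi0 i hi]
      ring
    rw [← h1, Finset.sum_congr rfl keyS, Finset.sum_neg_distrib]
    ring
  -- main squared inequality
  have hle2 : ∀ x : Fin n → ℝ, KSparse k x →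
      ∑ j, (A.mulVec v j - y j) ^ 2 ≤ ∑ j, (A.mulVec x j - y j) ^ 2 := by
    rintro x ⟨T, hTc, hT0⟩
    rw [hFv, hF x]
    have h1 : ∑ i ∈ T, (d i * x i ^ 2 - 2 * b i * x i)
        = ∑ i, (d i * x i ^ 2 - 2 * b i * x i) := by
      apply Finset.sum_subset (Finset.subset_univ T)
      intro i _ hi
      rw [hT0 i hi]
      ring
    have h2 : -∑ i ∈ T, z i ≤ ∑ i ∈ T, (d i * x i ^ 2 - 2 * b i * x i) := by
      rw [← Finset.sum_neg_distrib]
      exact Finset.sum_le_sum fun i _ => key i (x i)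
    have h3 : ∑ i ∈ T, z i ≤ ∑ i ∈ S, z i :=
      sum_le_sum_max z hz0 S T (hS ▸ hTc) hSmax
    linarith [h1 ▸ h2]
  have hsparse : KSparse k v := ⟨S, hS.le, hvi0⟩
  have hmain : ∀ x : Fin n → ℝ, KSparse k x →
      euclNorm (A.mulVec v - y) ≤ euclNorm (A.mulVec x - y) := by
    intro x hx
    unfold euclNorm
    apply Real.sqrt_le_sqrt
    simpa [Pi.sub_apply] using hle2 x hx
  exact ⟨hsparse, hmain, ⟨⟨v, hsparse, rfl⟩, by rintro r ⟨x, hx, rfl⟩; exact hmain x hx⟩⟩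
end

section
/- Let A be an m×n real matrix with m > n > 1 and full column rank. Then the following are equivalent: (i) AᵀA is a diagonal matrix; (ii) for every y ∈ ℝ^m and every index i at which the vector z = (AᵀA)⁻¹((Aᵀy)∘²) attains its maximum value, the vector v ∈ ℝ^n defined by v_i = ((AᵀA)⁻¹Aᵀy)_i and v_j = 0 for j ≠ i satisfies ‖Av − y‖ ≤ ‖Ax − y‖ for every 1-sparse x ∈ ℝ^n. -/
open Matrix

lemma euclNorm_le_euclNorm_iff {m : ℕ} {v w : Fin m → ℝ} :
    euclNorm v ≤ euclNorm w ↔ v ⬝ᵥ v ≤ w ⬝ᵥ w := by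
  simp only [euclNorm, dotProduct, ← sq]
  exact Real.sqrt_le_sqrt_iff (Finset.sum_nonneg fun i _ => sq_nonneg (w i))

lemma KSparse.eq_zero_or_exists_eq_single {n : ℕ} {x : Fin n → ℝ} (hx : KSparse 1 x) :
    x = 0 ∨ ∃ j, x = Pi.single j (x j) := by
  obtain ⟨T, hT, hxT⟩ := hx
  rcases T.eq_empty_or_nonempty with rfl | ⟨j, hj⟩
  · exact .inl (funext fun k => hxT k (Finset.notMem_empty k))
  · refine .inr ⟨j, funext fun k => ?_⟩
    rcases eq_or_ne k j with rfl | hkj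
    · simp
    · rw [Pi.single_eq_of_ne hkj]
      exact hxT k fun hk => hkj (Finset.card_le_one.mp hT k hk j hj)

lemma kSparse_one_single {n : ℕ} (j : Fin n) (t : ℝ) : KSparse 1 (Pi.single j t) :=
  ⟨{j}, by simp, fun _ hk => Pi.single_eq_of_ne (Finset.notMem_singleton.mp hk) _⟩

lemma fun_ite_eq_single {ι M : Type*} [DecidableEq ι] [Zero M] (f : ι → M) (i : ι) :
    (fun j => if j = i then f j else 0) = Pi.single i (f i) := by
  funext j
  rcases eq_or_ne j i with rfl | hji <;> simp [*]

section Quadratic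

variable {K : Type*} [Field K] {a b : K}

lemma mul_sq_sub_two_mul_eq (ha : a ≠ 0) (t : K) :
    a * t ^ 2 - 2 * t * b = a * (t - b / a) ^ 2 - b ^ 2 / a := by
  field_simp
  ring

variable [LinearOrder K] [IsStrictOrderedRing K]

lemma neg_sq_div_le_mul_sq_sub_two_mul (ha : 0 < a) (t : K) :
    -(b ^ 2 / a) ≤ a * t ^ 2 - 2 * t * b := by
  rw [mul_sq_sub_two_mul_eq ha.ne']
  nlinarith [mul_nonneg ha.le (sq_nonneg (t - b / a))]

lemma eq_div_of_forall_mul_sq_sub_two_mul_le (ha : 0 < a) {s : K}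
    (h : ∀ t, a * s ^ 2 - 2 * s * b ≤ a * t ^ 2 - 2 * t * b) : s = b / a := by
  have hs := h (b / a)
  rw [mul_sq_sub_two_mul_eq ha.ne', mul_sq_sub_two_mul_eq ha.ne', sub_self] at hs
  have : (s - b / a) ^ 2 = 0 := by nlinarith [sq_nonneg (s - b / a)]
  exact sub_eq_zero.mp (pow_eq_zero_iff two_ne_zero |>.mp this)

end Quadratic

namespace Matrix

variable {m n : Type*} [Fintype n]

lemma mulVec_injective_of_rank_eq_card {K : Type*} [Field K] {A : Matrix m n K}
    (h : A.rank = Fintype.card n) : Function.Injective A.mulVec := by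
  have hdim := A.mulVecLin.finrank_range_add_finrank_ker
  rw [← Matrix.rank, h, Module.finrank_fintype_fun_eq_card] at hdim
  have hker : LinearMap.ker A.mulVecLin = ⊥ := Submodule.finrank_eq_zero.mp (by omega)
  exact LinearMap.ker_eq_bot.mp hker

variable [Fintype m]

lemma posDef_transpose_mul_self_of_rank_eq_card {A : Matrix m n ℝ}
    (h : A.rank = Fintype.card n) : (Aᵀ * A).PosDef := by
  simpa only [conjTranspose_eq_transpose_of_trivial] using
    PosDef.conjTranspose_mul_self A (mulVec_injective_of_rank_eq_card h)

lemma mulVec_sub_dotProduct_self {R : Type*} [CommRing R] (A : Matrix m n R) (x : n → R)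
    (y : m → R) :
    (A *ᵥ x - y) ⬝ᵥ (A *ᵥ x - y) =
      x ⬝ᵥ ((Aᵀ * A) *ᵥ x) - 2 * (x ⬝ᵥ (Aᵀ *ᵥ y)) + y ⬝ᵥ y := by
  have hx : ∀ v : m → R, A *ᵥ x ⬝ᵥ v = x ⬝ᵥ (Aᵀ *ᵥ v) := fun v => by
    rw [dotProduct_mulVec, vecMul_transpose, dotProduct_comm]
  rw [sub_dotProduct, dotProduct_sub, dotProduct_sub, dotProduct_comm y (A *ᵥ x)]
  simp only [hx, mulVec_mulVec]
  ring

variable [DecidableEq n]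

lemma mulVec_single_sub_dotProduct_self {R : Type*} [CommRing R] (A : Matrix m n R) (y : m → R)
    (j : n) (t : R) :
    (A *ᵥ Pi.single j t - y) ⬝ᵥ (A *ᵥ Pi.single j t - y) =
      (Aᵀ * A) j j * t ^ 2 - 2 * t * (Aᵀ *ᵥ y) j + y ⬝ᵥ y := by
  rw [mulVec_sub_dotProduct_self, mulVec_single, single_dotProduct, single_dotProduct]
  simp only [Pi.smul_apply, col_apply, op_smul_eq_mul]
  ring

lemma IsDiag.inv_eq_diagonal {K : Type*} [Field K] {G : Matrix n n K} (hd : G.IsDiag)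
    (h0 : ∀ j, G j j ≠ 0) : G⁻¹ = diagonal fun j => (G j j)⁻¹ := by
  conv_lhs => rw [← hd.diagonal_diag]
  refine inv_eq_left_inv ?_
  rw [diagonal_mul_diagonal, ← diagonal_one]
  congr 1
  funext j
  exact inv_mul_cancel₀ (h0 j)

lemma mulVec_single_sub_dotProduct_self_le_of_isDiag {A : Matrix m n ℝ} (hG : (Aᵀ * A).PosDef)
    (hd : (Aᵀ * A).IsDiag) {y : m → ℝ} {i : n}
    (hmax : ∀ j, ((Aᵀ * A)⁻¹ *ᵥ fun l => (Aᵀ *ᵥ y) l ^ 2) j ≤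
      ((Aᵀ * A)⁻¹ *ᵥ fun l => (Aᵀ *ᵥ y) l ^ 2) i) (j : n) (t : ℝ) :
    (A *ᵥ Pi.single i (((Aᵀ * A)⁻¹ *ᵥ (Aᵀ *ᵥ y)) i) - y) ⬝ᵥ
        (A *ᵥ Pi.single i (((Aᵀ * A)⁻¹ *ᵥ (Aᵀ *ᵥ y)) i) - y) ≤
      (A *ᵥ Pi.single j t - y) ⬝ᵥ (A *ᵥ Pi.single j t - y) := by
  set G := Aᵀ * A
  set c := Aᵀ *ᵥ y
  have hinv := hd.inv_eq_diagonal fun k => hG.diag_pos.ne'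
  have hz : ∀ k, (G⁻¹ *ᵥ fun l => c l ^ 2) k = c k ^ 2 / G k k := fun k => by
    rw [hinv, mulVec_diagonal, inv_mul_eq_div]
  have hv : (G⁻¹ *ᵥ c) i = c i / G i i := by rw [hinv, mulVec_diagonal, inv_mul_eq_div]
  have hbest : G i i * (c i / G i i) ^ 2 - 2 * (c i / G i i) * c i = -(c i ^ 2 / G i i) := by
    rw [mul_sq_sub_two_mul_eq hG.diag_pos.ne']
    simp
  have hmaxj := hmax j
  rw [hz, hz] at hmaxj
  rw [hv, mulVec_single_sub_dotProduct_self, mulVec_single_sub_dotProduct_self, hbest]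
  linarith [neg_sq_div_le_mul_sq_sub_two_mul (b := c j) (hG.diag_pos (i := j)) t]

/-- With `w = G_qq G⁻¹ e_q - e_q` one computes `wᵀ G w = G_qq (G_qq (G⁻¹)_qq - 1)`, which
vanishes, so `w = 0`. -/
lemma PosDef.col_eq_single_of_inv_apply_eq_inv {G : Matrix n n ℝ} (hG : G.PosDef) {q : n}
    (h : G⁻¹ q q = (G q q)⁻¹) : G.col q = Pi.single q (G q q) := by
  set e : n → ℝ := Pi.single q 1
  set w := G q q • (G⁻¹ *ᵥ e) - e
  have hGe : G *ᵥ e = G.col q := mulVec_single_one G q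
  have hGw : G *ᵥ w = G q q • e - G.col q := by
    rw [mulVec_sub, mulVec_smul, mulVec_mulVec,
      mul_nonsing_inv G ((isUnit_iff_isUnit_det G).mp hG.isUnit), one_mulVec, hGe]
  have hself_adjoint : ∀ u u' : n → ℝ, u ⬝ᵥ (G *ᵥ u') = (G *ᵥ u) ⬝ᵥ u' := fun u u' => by
    rw [dotProduct_mulVec, ← mulVec_transpose, ← conjTranspose_eq_transpose_of_trivial,
      hG.isHermitian.eq]
  have hwe : w ⬝ᵥ e = 0 := by
    simp [w, e, h, hG.diag_pos.ne']
  have hwcol : w ⬝ᵥ G.col q = 0 := by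
    rw [← hGe, hself_adjoint, hGw]
    simp [e]
  have hw : w = 0 := by
    by_contra hne
    have hpos := hG.dotProduct_mulVec_pos hne
    rw [star_trivial, hGw, dotProduct_sub, dotProduct_smul, hwe, hwcol] at hpos
    simp at hpos
  have hcol := hGw
  rw [hw, mulVec_zero, eq_comm, sub_eq_zero] at hcol
  rw [← hcol]
  ext p
  simp [e, Pi.single_apply]

lemma PosDef.isDiag_of_forall_isMax {G : Matrix n n ℝ} (hG : G.PosDef)
    (h : ∀ q i, (∀ j, (G⁻¹ *ᵥ Pi.single q 1) j ≤ (G⁻¹ *ᵥ Pi.single q 1) i) →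
      (G⁻¹ *ᵥ Pi.single q 1) i = (Pi.single q 1 : n → ℝ) i / G i i) :
    G.IsDiag := by
  intro p q hpq
  have hcol : ∀ k, (G⁻¹ *ᵥ Pi.single q 1) k = G⁻¹ k q := fun k => by
    rw [mulVec_single_one, col_apply]
  have : Nonempty n := ⟨q⟩
  obtain ⟨i, hi⟩ := Finite.exists_max fun k => (G⁻¹ *ᵥ Pi.single q 1) k
  have hopt := h q i hi
  have hiq : i = q := by
    by_contra hiq
    have hqi := hi q
    rw [hopt, Pi.single_eq_of_ne hiq, zero_div, hcol] at hqi
    exact hqi.not_gt hG.inv.diag_pos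
  subst hiq
  rw [hcol, Pi.single_eq_same, one_div] at hopt
  simpa [hpq] using congrFun (hG.col_eq_single_of_inv_apply_eq_inv hopt) p

end Matrix

theorem stmt_1_general {m n : ℕ}
    (A : Matrix (Fin m) (Fin n) ℝ) (hrank : A.rank = n) :
    (Aᵀ * A).IsDiag ↔
      ∀ (y : Fin m → ℝ) (i : Fin n),
        (∀ j : Fin n,
            (Aᵀ * A)⁻¹.mulVec (fun l => (Aᵀ.mulVec y l) ^ 2) j ≤
              (Aᵀ * A)⁻¹.mulVec (fun l => (Aᵀ.mulVec y l) ^ 2) i) →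
          ∀ x : Fin n → ℝ, KSparse 1 x →
            euclNorm (A.mulVec
                (fun j => if j = i then ((Aᵀ * A)⁻¹.mulVec (Aᵀ.mulVec y)) j else 0) - y) ≤
              euclNorm (A.mulVec x - y) := by
  have hG : (Aᵀ * A).PosDef :=
    posDef_transpose_mul_self_of_rank_eq_card (hrank.trans (Fintype.card_fin n).symm)
  constructor
  · intro hd y i hmax x hx
    rw [fun_ite_eq_single, euclNorm_le_euclNorm_iff]
    obtain rfl | ⟨j, hj⟩ := hx.eq_zero_or_exists_eq_single
    · rw [← Pi.single_zero i]
      exact mulVec_single_sub_dotProduct_self_le_of_isDiag hG hd hmax i 0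
    · rw [hj]
      exact mulVec_single_sub_dotProduct_self_le_of_isDiag hG hd hmax j (x j)
  · intro H
    refine hG.isDiag_of_forall_isMax fun q i hmax => ?_
    set y := A *ᵥ ((Aᵀ * A)⁻¹ *ᵥ Pi.single q 1)
    have hAy : Aᵀ *ᵥ y = Pi.single q 1 := by
      rw [mulVec_mulVec, mulVec_mulVec,
        mul_nonsing_inv _ ((isUnit_iff_isUnit_det _).mp hG.isUnit), one_mulVec]
    have hsq : (fun l => (Aᵀ *ᵥ y) l ^ 2) = Pi.single q 1 := by
      rw [hAy]
      ext l
      rcases eq_or_ne l q with rfl | hlq <;> simp [*]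
    refine eq_div_of_forall_mul_sq_sub_two_mul_le hG.diag_pos fun t => ?_
    have hopt := H y i (by simpa only [hsq] using hmax) (Pi.single i t) (kSparse_one_single i t)
    rw [fun_ite_eq_single, euclNorm_le_euclNorm_iff, mulVec_single_sub_dotProduct_self,
      mulVec_single_sub_dotProduct_self, hAy] at hopt
    linarith

theorem stmt_1 {m n : ℕ} (hmn : n < m) (hn : 1 < n)
    (A : Matrix (Fin m) (Fin n) ℝ) (hrank : A.rank = n) :
    (Aᵀ * A).IsDiag ↔
      ∀ (y : Fin m → ℝ) (i : Fin n),
        (∀ j : Fin n,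
            (Aᵀ * A)⁻¹.mulVec (fun l => (Aᵀ.mulVec y l) ^ 2) j ≤
              (Aᵀ * A)⁻¹.mulVec (fun l => (Aᵀ.mulVec y l) ^ 2) i) →
          ∀ x : Fin n → ℝ, KSparse 1 x →
            euclNorm (A.mulVec
                (fun j => if j = i then ((Aᵀ * A)⁻¹.mulVec (Aᵀ.mulVec y)) j else 0) - y) ≤
              euclNorm (A.mulVec x - y) :=
  stmt_1_general A hrank
end

section
/- Let A be an m×n real matrix with m > n > 1 and full column rank, and fix an index i ∈ {1,…,n}. If ((AᵀA)⁻¹)_{ii} · (AᵀA)_{ii} = 1, then (AᵀA)_{ij} = 0 for every j ≠ i (the i-th row and column of AᵀA are zero off the diagonal). -/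
open Matrix

theorem stmt_4 {m n : ℕ} (hmn : n < m) (hn : 1 < n)
    (A : Matrix (Fin m) (Fin n) ℝ) (hrank : A.rank = n) (i : Fin n)
    (h : (Aᵀ * A)⁻¹ i i * (Aᵀ * A) i i = 1) :
    ∀ j : Fin n, j ≠ i → (Aᵀ * A) i j = 0 ∧ (Aᵀ * A) j i = 0 := by
  classical
  set B := Aᵀ * A with hBdef
  have hsymm : Bᵀ = B := by
    rw [hBdef, transpose_mul, transpose_transpose]
  have hps : B.PosSemidef := by
    have := posSemidef_conjTranspose_mul_self A
    rwa [conjTranspose_eq_transpose_of_trivial] at this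
  -- kernel of B is trivial
  have hker : ∀ v : Fin n → ℝ, B *ᵥ v = 0 → v = 0 := by
    rw [← Matrix.ker_mulVecLin_eq_bot_iff, hBdef,
      Matrix.ker_mulVecLin_transpose_mul_self]
    have h1 : Module.finrank ℝ (LinearMap.range A.mulVecLin) = n := hrank
    have h2 := LinearMap.finrank_range_add_finrank_ker A.mulVecLin
    rw [h1] at h2
    simp only [Module.finrank_pi, Fintype.card_fin] at h2
    have h3 : Module.finrank ℝ (LinearMap.ker A.mulVecLin) = 0 := by omega
    exact Submodule.finrank_eq_zero.mp h3
  have hdet : IsUnit B.det := by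
    rw [← Matrix.isUnit_iff_isUnit_det, ← Matrix.mulVec_injective_iff_isUnit]
    intro x y hxy
    have : B *ᵥ (x - y) = 0 := by rw [mulVec_sub, hxy, sub_self]
    have := hker _ this
    rwa [sub_eq_zero] at this
  have hBBinv : B * B⁻¹ = 1 := Matrix.mul_nonsing_inv B hdet
  set e : Fin n → ℝ := Pi.single i 1 with he
  set x : Fin n → ℝ := B⁻¹ *ᵥ e with hx
  have hBx : B *ᵥ x = e := by
    rw [hx, mulVec_mulVec, hBBinv, one_mulVec]
  set c : ℝ := B i i with hc
  have hc0 : c ≠ 0 := by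
    intro hc0
    rw [hc0, mul_zero] at h
    exact zero_ne_one h
  set v : Fin n → ℝ := c • x - e with hv
  -- compute vᵀ B v = 0
  have hxe : x ⬝ᵥ e = B⁻¹ i i := by
    rw [he, dotProduct_single, mul_one, hx, mulVec_single]
    simp
  have hxBe : x ⬝ᵥ (B *ᵥ e) = 1 := by
    rw [dotProduct_mulVec, ← mulVec_transpose, hsymm, hBx, he, single_dotProduct,
      one_mul, Pi.single_eq_same]
  have hee : e ⬝ᵥ e = (1 : ℝ) := by
    rw [he, single_dotProduct, one_mul, Pi.single_eq_same]
  have heBe : e ⬝ᵥ (B *ᵥ e) = c := by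
    rw [he, single_dotProduct, one_mul, mulVec_single]
    simp [hc]
  have hquad : v ⬝ᵥ (B *ᵥ v) = 0 := by
    have hBv : B *ᵥ v = c • e - B *ᵥ e := by
      rw [hv, mulVec_sub, mulVec_smul, hBx]
    rw [hv, hBv, sub_dotProduct, dotProduct_sub, dotProduct_sub,
      smul_dotProduct, smul_dotProduct, dotProduct_smul, dotProduct_smul,
      hxe, hxBe, hee, heBe]
    simp only [smul_eq_mul]
    have hcc : c * (c * B⁻¹ i i) = c := by
      rw [mul_comm c (B⁻¹ i i), h, mul_one]
    rw [hcc]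
    ring
  have hv0 : v = 0 :=
    hker v ((hps.dotProduct_mulVec_zero_iff v).mp (by simpa using hquad))
  -- from c • x = e, get B *ᵥ e = c • e
  have hcx : c • x = e := by
    have := sub_eq_zero.mp (hv ▸ hv0 : c • x - e = 0)
    exact this
  have hBe : B *ᵥ e = c • e := by
    have : B *ᵥ (c • x) = B *ᵥ e := by rw [hcx]
    rw [mulVec_smul, hBx] at this
    exact this.symm
  intro j hj
  have hji : B j i = 0 := by
    have h1 : (B *ᵥ e) j = B j i := by
      rw [he, mulVec_single]
      simp
    have h2 : (c • e) j = 0 := by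
      rw [he, Pi.smul_apply, Pi.single_eq_of_ne hj, smul_zero]
    rw [← h1, hBe, h2]
  refine ⟨?_, hji⟩
  have := congrFun (congrFun hsymm i) j
  rw [transpose_apply] at this
  rw [← this, hji]
end
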